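/- arXiv:1102.5749 — 8 statements merged into one kernel-verified Lean document; each statement's English description precedes it below -/
import Mathlib

section
/- Let n ≥ 2 and A = (a_{ij}) be an n × n real matrix. Define σ₁(A) = Σᵢ a_{ii}, σ₁(A|1) = Σ_{i=2}^n a_{ii}, and σ₂(A) = Σ_{1≤i<j≤n} (a_{ii}a_{jj} − a_{ij}a_{ji}). Then σ₁(A)·σ₁(A|1) = σ₂(A) + (n/(2(n−1)))·σ₁(A|1)² + Σ_{1≤i<j≤n} a_{ij}a_{ji} + (1/(2(n−1)))·Σ_{2≤i<j≤n} (a_{ii} − a_{jj})². -/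
/-!
Write `d` for the diagonal of `A`, `S = ∑ d i` and `T = ∑_{i ≥ 1} d i`. The off-diagonal products
cancel, so `σ₂(A) + ∑_{i<j} a_{ij} a_{ji} = ∑_{i<j} d_i d_j = (S² - ∑ d_i²) / 2`, while Lagrange's
identity gives `∑_{1 ≤ i < j} (d_i - d_j)² = (n - 1) ∑_{i ≥ 1} d_i² - T²`. Substituting
`S = d_0 + T`, both sides become `d_0 T + T²`.
-/

section PairSums

variable {ι : Type*} [Fintype ι] [LinearOrder ι]

theorem two_nsmul_sum_ite_lt_of_symm {M : Type*} [AddCommGroup M] (f : ι → ι → M)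
    (hf : ∀ i j, f i j = f j i) :
    2 • ∑ i, ∑ j, (if i < j then f i j else 0) = ∑ i, ∑ j, f i j - ∑ i, f i i := by
  have hswap : ∑ i, ∑ j, (if i < j then f i j else 0) = ∑ i, ∑ j, if j < i then f i j else 0 := by
    rw [Finset.sum_comm]
    simp_rw [hf]
  have hsplit : ∀ i j, (if i < j then f i j else 0) + (if j < i then f i j else 0) =
      f i j - if i = j then f i j else 0 := by
    intro i j
    rcases lt_trichotomy i j with h | rfl | h
    · simp [h, h.ne, h.not_gt]
    · simp
    · simp [h, h.ne', h.not_gt]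
  rw [two_nsmul]
  nth_rw 2 [hswap]
  simp_rw [← Finset.sum_add_distrib, hsplit, Finset.sum_sub_distrib, Finset.sum_ite_eq,
    Finset.mem_univ, if_true]

theorem two_mul_sum_ite_lt_mul {R : Type*} [CommRing R] (x : ι → R) :
    2 * ∑ i, ∑ j, (if i < j then x i * x j else 0) = (∑ i, x i) ^ 2 - ∑ i, x i ^ 2 := by
  rw [two_mul, ← two_nsmul, two_nsmul_sum_ite_lt_of_symm _ fun i j => mul_comm _ _, sq,
    Finset.sum_mul_sum]
  simp_rw [sq]

theorem sum_ite_lt_sub_sq {K : Type*} [Field K] [CharZero K] (x : ι → K) :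
    ∑ i, ∑ j, (if i < j then (x i - x j) ^ 2 else 0) =
      Fintype.card ι * ∑ i, x i ^ 2 - (∑ i, x i) ^ 2 := by
  have h := two_nsmul_sum_ite_lt_of_symm (fun i j => (x i - x j) ^ 2) fun i j => by ring
  have hexpand : ∑ i, ∑ j, (x i - x j) ^ 2 =
      2 * (Fintype.card ι * ∑ i, x i ^ 2 - (∑ i, x i) ^ 2) := by
    simp only [sub_sq, Finset.sum_add_distrib, Finset.sum_sub_distrib, Finset.sum_const,
      Finset.card_univ, nsmul_eq_mul, ← Finset.mul_sum, ← Finset.sum_mul]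
    ring
  rw [hexpand, nsmul_eq_mul] at h
  simpa using h

end PairSums

theorem Fin.sum_filter_val_ne_zero {M : Type*} [AddCommMonoid M] {m : ℕ} (f : Fin (m + 1) → M) :
    ∑ i ∈ Finset.univ.filter (fun i : Fin (m + 1) => i.val ≠ 0), f i = ∑ i : Fin m, f i.succ := by
  simp [Finset.sum_filter, Fin.sum_univ_succ]

/-- Proposition 2.1 (identity): for an `n × n` real matrix `A` with `n ≥ 2`,
`σ₁(A)·σ₁(A|1) = σ₂(A) + (n/(2(n−1)))·σ₁(A|1)² + Σ_{i<j} a_{ij}a_{ji}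
  + (1/(2(n−1)))·Σ_{2≤i<j} (a_{ii}−a_{jj})²`. -/
theorem stmt0 (n : ℕ) (hn : 2 ≤ n) (A : Matrix (Fin n) (Fin n) ℝ) :
    (∑ i, A i i) * (∑ i ∈ Finset.univ.filter (fun i : Fin n => i.val ≠ 0), A i i) =
      (∑ i, ∑ j, if i < j then A i i * A j j - A i j * A j i else 0)
      + (n : ℝ) / (2 * ((n : ℝ) - 1)) *
          (∑ i ∈ Finset.univ.filter (fun i : Fin n => i.val ≠ 0), A i i) ^ 2
      + (∑ i, ∑ j, if i < j then A i j * A j i else 0)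
      + 1 / (2 * ((n : ℝ) - 1)) *
          (∑ i, ∑ j, if i.val ≠ 0 ∧ i < j then (A i i - A j j) ^ 2 else 0) := by
  obtain ⟨m, rfl⟩ : ∃ m, n = m + 1 := ⟨n - 1, by omega⟩
  have hm : (m : ℝ) ≠ 0 := by norm_cast; omega
  have hcancel : ∑ i, ∑ j, (if i < j then A i i * A j j - A i j * A j i else 0)
      + ∑ i, ∑ j, (if i < j then A i j * A j i else 0)
      = ∑ i, ∑ j, if i < j then A i i * A j j else 0 := by
    simp_rw [← Finset.sum_add_distrib, ← ite_add_zero, sub_add_cancel]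
  have hprod := two_mul_sum_ite_lt_mul fun i : Fin (m + 1) => A i i
  have hshift : ∑ i, ∑ j, (if i.val ≠ 0 ∧ i < j then (A i i - A j j) ^ 2 else 0 : ℝ)
      = ∑ i : Fin m, ∑ j, if i < j then (A i.succ i.succ - A j.succ j.succ) ^ 2 else 0 := by
    simp [Fin.sum_univ_succ, Fin.succ_lt_succ_iff]
  rw [Fin.sum_filter_val_ne_zero, hshift, sum_ite_lt_sub_sq, Fintype.card_fin]
  rw [Fin.sum_univ_succ (fun i => A i i)] at hprod ⊢
  rw [Fin.sum_univ_succ (fun i => A i i ^ 2)] at hprod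
  push_cast
  rw [add_sub_cancel_right]
  field_simp
  linear_combination -(m : ℝ) * hprod - 2 * m * hcancel
end

section
/- Let n ≥ 2 and A = (a_{ij}) be an n × n real matrix with a_{ij}a_{ji} ≥ 0 for all 1 ≤ i < j ≤ n. Then σ₁(A)·σ₁(A|1) ≥ σ₂(A) + (n/(2(n−1)))·σ₁(A|1)², where σ₁(A) = Σᵢ a_{ii}, σ₁(A|1) = Σ_{i=2}^n a_{ii}, and σ₂(A) = Σ_{1≤i<j≤n}(a_{ii}a_{jj} − a_{ij}a_{ji}). -/
/-!
Since `a_{ij}a_{ji} ≥ 0`, `σ₂(A)` is at most the second elementary symmetric function of the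
diagonal, `((∑ dᵢ)² - ∑ dᵢ²) / 2`. Writing `x = a₁₁`, `t = σ₁(A|1)` and `Q = ∑_{i ≥ 2} aᵢᵢ²`, the
claim then reduces to `t² / (n - 1) ≤ Q`, which is Cauchy–Schwarz over the `n - 1` indices `i ≥ 2`.
-/

open Finset

section

variable {ι : Type*} [Fintype ι] [LinearOrder ι]

lemma two_mul_sum_lt_mul_eq_sq_sum_sub_sum_sq {R : Type*} [CommRing R] (d : ι → R) :
    2 * ∑ i, ∑ j, (if i < j then d i * d j else 0) = (∑ i, d i) ^ 2 - ∑ i, d i ^ 2 := by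
  have hsplit (i j : ι) : d i * d j = ((if i < j then d i * d j else 0) +
      (if j < i then d j * d i else 0)) + (if i = j then d i * d j else 0) := by
    rcases lt_trichotomy i j with h | rfl | h
    · simp [h, h.not_gt, h.ne]
    · simp
    · simp [h, h.not_gt, h.ne', mul_comm]
  have hdiag : ∑ i, ∑ j, (if i = j then d i * d j else 0) = ∑ i, d i ^ 2 := by
    simp [sq]
  have hswap : ∑ i, ∑ j, (if j < i then d j * d i else 0) =
      ∑ i, ∑ j, (if i < j then d i * d j else 0) := sum_comm
  have hexpand : (∑ i, d i) ^ 2 = ∑ i, ∑ j, (((if i < j then d i * d j else 0) +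
      (if j < i then d j * d i else 0)) + (if i = j then d i * d j else 0)) := by
    rw [sq, sum_mul_sum]
    exact sum_congr rfl fun i _ => sum_congr rfl fun j _ => hsplit i j
  simp only [sum_add_distrib, hswap, hdiag] at hexpand
  rw [hexpand]
  ring

lemma Matrix.sum_lt_minor_le_sum_lt_diag_mul (A : Matrix ι ι ℝ)
    (hA : ∀ i j, i < j → 0 ≤ A i j * A j i) :
    (∑ i, ∑ j, if i < j then A i i * A j j - A i j * A j i else 0) ≤
      ∑ i, ∑ j, if i < j then A i i * A j j else 0 := by
  gcongr with i _ j _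
  split_ifs with h
  · linarith [hA i j h]
  · rfl

end

lemma Fin.filter_val_ne_zero_eq_erase {n : ℕ} (hn : 0 < n) :
    univ.filter (fun i : Fin n => i.val ≠ 0) = univ.erase ⟨0, hn⟩ := by
  ext i; simp [Fin.ext_iff]

/-- Proposition 2.1 (inequality): if `a_{ij}a_{ji} ≥ 0` for all `i ≠ j`, then
`σ₁(A)·σ₁(A|1) ≥ σ₂(A) + (n/(2(n−1)))·σ₁(A|1)²`. -/
theorem stmt1 (n : ℕ) (hn : 2 ≤ n) (A : Matrix (Fin n) (Fin n) ℝ)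
    (hA : ∀ i j : Fin n, i < j → 0 ≤ A i j * A j i) :
    (∑ i, A i i) * (∑ i ∈ Finset.univ.filter (fun i : Fin n => i.val ≠ 0), A i i) ≥
      (∑ i, ∑ j, if i < j then A i i * A j j - A i j * A j i else 0)
      + (n : ℝ) / (2 * ((n : ℝ) - 1)) *
          (∑ i ∈ Finset.univ.filter (fun i : Fin n => i.val ≠ 0), A i i) ^ 2 := by
  set z : Fin n := ⟨0, by omega⟩
  rw [Fin.filter_val_ne_zero_eq_erase (by omega)]
  have hσ₂ := Matrix.sum_lt_minor_le_sum_lt_diag_mul A hA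
  have he₂ := two_mul_sum_lt_mul_eq_sq_sum_sub_sum_sq (fun i => A i i)
  have hsplit (f : Fin n → ℝ) : ∑ i, f i = f z + ∑ i ∈ univ.erase z, f i :=
    (add_sum_erase _ _ (mem_univ z)).symm
  rw [hsplit fun i => A i i, hsplit fun i => A i i ^ 2] at he₂
  rw [hsplit fun i => A i i]
  set t := ∑ i ∈ univ.erase z, A i i
  set Q := ∑ i ∈ univ.erase z, A i i ^ 2
  have hn₁ : (0 : ℝ) < n - 1 := by
    have : (2 : ℝ) ≤ n := by exact_mod_cast hn
    linarith
  have hcs : t ^ 2 ≤ (n - 1) * Q := by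
    have h := sq_sum_le_card_mul_sum_sq (s := univ.erase z) (f := fun i => A i i)
    rwa [card_erase_of_mem (mem_univ z), card_fin, Nat.cast_pred (by omega)] at h
  have hcoef : (n : ℝ) / (2 * (n - 1)) * t ^ 2 ≤ (t ^ 2 + Q) / 2 := by
    rw [div_mul_eq_mul_div, div_le_iff₀ (by positivity)]
    nlinarith
  linarith
end

section
/- Let n ≥ 2 and A be an n × n real matrix with a_{ij}a_{ji} ≥ 0 for all i ≠ j. Equality σ₁(A)·σ₁(A|1) = σ₂(A) + (n/(2(n−1)))·σ₁(A|1)² holds if and only if a_{22} = a_{33} = ⋯ = a_{nn} and a_{ij}a_{ji} = 0 for all i ≠ j. -/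
/-!
Write `σ₁ = σ₁(A|1) + a₁₁`. Since `2 σ₂(A) = σ₁(A)² − tr(A²)` and
`tr(A²) = ∑ᵢ aᵢᵢ² + ∑_{i ≠ j} aᵢⱼ aⱼᵢ`, Lagrange's identity
`∑_{i,j ≥ 2} (aᵢᵢ − aⱼⱼ)² = 2 ((n − 1) ∑_{i ≥ 2} aᵢᵢ² − σ₁(A|1)²)` turns the defect
`σ₁(A) σ₁(A|1) − σ₂(A) − n/(2(n−1)) σ₁(A|1)²` into
`∑_{i,j ≥ 2} (aᵢᵢ − aⱼⱼ)² / (4(n − 1)) + ∑_{i ≠ j} aᵢⱼ aⱼᵢ / 2`.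
Both terms are sums of nonnegative reals, so the defect vanishes iff every summand does.
-/

open Finset

namespace Finset

variable {ι R : Type*}

theorem sum_sum_sub_sq [CommRing R] (s : Finset ι) (x : ι → R) :
    ∑ i ∈ s, ∑ j ∈ s, (x i - x j) ^ 2 = 2 * (#s * ∑ i ∈ s, x i ^ 2 - (∑ i ∈ s, x i) ^ 2) := by
  simp only [sub_sq, sum_add_distrib, sum_sub_distrib, sum_const, nsmul_eq_mul, ← mul_sum,
    ← sum_mul]
  ring

theorem sum_sum_sub_sq_eq_zero_iff [Ring R] [LinearOrder R] [IsStrictOrderedRing R]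
    {s : Finset ι} {x : ι → R} :
    ∑ i ∈ s, ∑ j ∈ s, (x i - x j) ^ 2 = 0 ↔ ∀ i ∈ s, ∀ j ∈ s, x i = x j := by
  simp_rw [sum_eq_zero_iff_of_nonneg (fun _ _ => sum_nonneg fun _ _ => sq_nonneg _),
    sum_eq_zero_iff_of_nonneg (fun _ _ => sq_nonneg _), sq_eq_zero_iff, sub_eq_zero]

theorem two_mul_sum_sum_ite_lt [Fintype ι] [LinearOrder ι] [CommRing R] {g : ι → ι → R}
    (hsymm : ∀ i j, g i j = g j i) (hdiag : ∀ i, g i i = 0) :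
    2 * ∑ i, ∑ j, (if i < j then g i j else 0) = ∑ i, ∑ j, g i j := by
  have hsplit : ∀ i j, g i j = (if i < j then g i j else 0) + (if j < i then g j i else 0) := by
    intro i j
    rcases lt_trichotomy i j with h | rfl | h
    · simp [h, h.not_gt]
    · simp [hdiag]
    · simp [h, h.not_gt, hsymm i j]
  rw [sum_congr rfl fun i _ => sum_congr rfl fun j _ => hsplit i j]
  simp only [sum_add_distrib]
  rw [sum_comm (f := fun i j => if j < i then g j i else 0)]
  ring

end Finset

namespace Matrix

variable {ι R : Type*} [Fintype ι] [CommRing R]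

theorem two_mul_sum_principal_minors_two [LinearOrder ι] (A : Matrix ι ι R) :
    2 * ∑ i, ∑ j, (if i < j then A i i * A j j - A i j * A j i else 0) =
      (∑ i, A i i) ^ 2 - (A * A).trace := by
  rw [two_mul_sum_sum_ite_lt (fun i j => by ring) (fun i => sub_self _)]
  simp only [trace, diag, mul_apply, sum_sub_distrib, sq, sum_mul_sum]

theorem trace_mul_self [DecidableEq ι] (A : Matrix ι ι R) :
    (A * A).trace = ∑ i, A i i ^ 2 + ∑ p ∈ univ.offDiag, A p.1 p.2 * A p.2 p.1 := by
  simp only [trace, diag, mul_apply]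
  rw [← sum_product', ← diag_union_offDiag, sum_union (disjoint_diag_offDiag _), sum_diag]
  simp only [sq]

theorem sum_offDiag_mul_eq_zero_iff [DecidableEq ι] {A : Matrix ι ι ℝ}
    (hA : ∀ i j, i ≠ j → 0 ≤ A i j * A j i) :
    ∑ p ∈ univ.offDiag, A p.1 p.2 * A p.2 p.1 = 0 ↔ ∀ i j, i ≠ j → A i j * A j i = 0 := by
  rw [sum_eq_zero_iff_of_nonneg fun p hp => hA _ _ (mem_offDiag.1 hp).2.2]
  simp [mem_offDiag]

theorem sum_diag_mul_sum_erase_sub_eq [LinearOrder ι] (A : Matrix ι ι ℝ) (i₀ : ι)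
    (hι : 1 < Fintype.card ι) :
    (∑ i, A i i) * (∑ i ∈ univ.erase i₀, A i i) -
      ((∑ i, ∑ j, if i < j then A i i * A j j - A i j * A j i else 0) +
        (Fintype.card ι : ℝ) / (2 * ((Fintype.card ι : ℝ) - 1)) *
          (∑ i ∈ univ.erase i₀, A i i) ^ 2) =
      (∑ i ∈ univ.erase i₀, ∑ j ∈ univ.erase i₀, (A i i - A j j) ^ 2) /
          (4 * ((Fintype.card ι : ℝ) - 1)) +
        (∑ p ∈ univ.offDiag, A p.1 p.2 * A p.2 p.1) / 2 := by
  have hm : (Fintype.card ι : ℝ) - 1 ≠ 0 := by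
    rw [sub_ne_zero]; exact_mod_cast hι.ne'
  have hcard : (#(univ.erase i₀) : ℝ) = Fintype.card ι - 1 := by
    rw [card_erase_of_mem (mem_univ _), card_univ, Nat.cast_sub hι.le, Nat.cast_one]
  have hsum_diag := (add_sum_erase _ (fun i => A i i) (mem_univ i₀)).symm
  have hσ₂ := two_mul_sum_principal_minors_two A
  rw [trace_mul_self, hsum_diag, ← add_sum_erase _ (fun i => A i i ^ 2) (mem_univ i₀)] at hσ₂
  rw [sum_sum_sub_sq, hcard, hsum_diag, eq_div_of_mul_eq two_ne_zero ((mul_comm _ _).trans hσ₂)]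
  field_simp
  ring

end Matrix

/-- Proposition 2.1 (equality case): for an `n × n` real matrix with
`a_{ij}a_{ji} ≥ 0` for `i ≠ j`, equality
`σ₁(A)·σ₁(A|1) = σ₂(A) + (n/(2(n−1)))·σ₁(A|1)²` holds if and only if
`a_{22} = ⋯ = a_{nn}` and `a_{ij}a_{ji} = 0` for all `i ≠ j`. -/
theorem stmt2 (n : ℕ) (hn : 2 ≤ n) (A : Matrix (Fin n) (Fin n) ℝ)
    (hA : ∀ i j : Fin n, i ≠ j → 0 ≤ A i j * A j i) :
    ((∑ i, A i i) * (∑ i ∈ Finset.univ.filter (fun i : Fin n => i.val ≠ 0), A i i) =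
      (∑ i, ∑ j, if i < j then A i i * A j j - A i j * A j i else 0)
      + (n : ℝ) / (2 * ((n : ℝ) - 1)) *
          (∑ i ∈ Finset.univ.filter (fun i : Fin n => i.val ≠ 0), A i i) ^ 2)
    ↔ ((∀ i j : Fin n, i.val ≠ 0 → j.val ≠ 0 → A i i = A j j) ∧
       (∀ i j : Fin n, i ≠ j → A i j * A j i = 0)) := by
  let i₀ : Fin n := ⟨0, by omega⟩
  have hD : univ.filter (fun i : Fin n => i.val ≠ 0) = univ.erase i₀ := by
    ext i; simp [i₀, Fin.ext_iff]
  have hm : (0 : ℝ) < n - 1 := by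
    rw [sub_pos]; exact_mod_cast hn
  have hdefect := Matrix.sum_diag_mul_sum_erase_sub_eq A i₀ (by rw [Fintype.card_fin]; omega)
  rw [Fintype.card_fin] at hdefect
  rw [hD, ← sub_eq_zero, hdefect, add_eq_zero_iff_of_nonneg
    (div_nonneg (sum_nonneg fun _ _ => sum_nonneg fun _ _ => sq_nonneg _) (by positivity))
    (div_nonneg (sum_nonneg fun p hp => hA _ _ (mem_offDiag.1 hp).2.2) zero_le_two),
    div_eq_zero_iff, div_eq_zero_iff, sum_sum_sub_sq_eq_zero_iff,
    Matrix.sum_offDiag_mul_eq_zero_iff hA]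
  simp only [mul_ne_zero four_ne_zero hm.ne', two_ne_zero, or_false, mem_erase, mem_univ,
    and_true, ne_eq, Fin.ext_iff, i₀, imp_forall_iff]
end

section
/- Let Ω ⊂ ℝⁿ be open and f ∈ C²(Ω), with all second partial derivatives continuous (so that f_{ij} = f_{ji}). Then the expression R(f) := Σ_{i,j} (A_i^i A_j^j − A_i^j A_j^i), where A_j^i = ∂_j(f_i/w) and w = √(1+|Df|²), satisfies R(f) = Σ_j ∂_j [ Σ_i (f_{ii} f_j − f_{ij} f_i)/(1+|Df|²) ] at every point where f is three times differentiable. -/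
/-!
At a point write `g_i = f_i`, `H_ij = f_ij`, `T_ijk = f_ijk` and `Q = 1 + |g|² = w²`. The quotient
and chain rules give `A_ij = H_ij / w - g_i (Σ_l g_l H_lj) / w³`, and they express the derivative of
the flux `Σ_i (f_ii f_j - f_ij f_i) / Q` through `g`, `H`, `T` as well. Both sides are then double
sums of rational expressions in these numbers. Symmetrising in `(i, j)` reduces the claim to a
termwise identity: the third-order terms `T_iij g_j - T_ijj g_i` cancel with their swaps because
second and third derivatives are symmetric, and the rest is checked by clearing `Q`. No property of
the directions `e_i` beyond this symmetry enters, so partial derivatives are taken along an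
arbitrary family of vectors.
-/

open Topology ContinuousLinearMap

theorem HasFDerivAt.div {𝕜 E : Type*} [NontriviallyNormedField 𝕜] [NormedAddCommGroup E]
    [NormedSpace 𝕜 E] {c d : E → 𝕜} {c' d' : E →L[𝕜] 𝕜} {x : E}
    (hc : HasFDerivAt c c' x) (hd : HasFDerivAt d d' x) (hx : d x ≠ 0) :
    HasFDerivAt (fun y => c y / d y) ((d x)⁻¹ • c' - (c x / d x ^ 2) • d') x := by
  simp only [div_eq_mul_inv]
  refine (hc.mul ((hasDerivAt_inv hx).comp_hasFDerivAt x hd)).congr_fderiv ?_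
  ext v
  simp only [add_apply, smul_apply, sub_apply, Function.comp_apply, smul_eq_mul]
  field_simp
  ring

theorem HasFDerivAt.apply_const {𝕜 E F G : Type*} [NontriviallyNormedField 𝕜]
    [NormedAddCommGroup E] [NormedSpace 𝕜 E] [NormedAddCommGroup F] [NormedSpace 𝕜 F]
    [NormedAddCommGroup G] [NormedSpace 𝕜 G] {c : E → F →L[𝕜] G} {c' : E →L[𝕜] F →L[𝕜] G}
    {x : E} (hc : HasFDerivAt c c' x) (v : F) :
    HasFDerivAt (fun y => c y v) (c'.flip v) x := by
  simpa using hc.clm_apply (hasFDerivAt_const v x)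

theorem Finset.sum_sum_eq_of_add_swap {ι M : Type*} [Fintype ι] [AddCommMonoid M]
    [IsAddTorsionFree M] {L R : ι → ι → M} (h : ∀ i j, L i j + L j i = R i j + R j i) :
    ∑ i, ∑ j, L i j = ∑ j, ∑ i, R i j := by
  have hsymm (K : ι → ι → M) : ∑ i, ∑ j, (K i j + K j i) = 2 • ∑ i, ∑ j, K i j := by
    rw [two_nsmul]
    simp only [Finset.sum_add_distrib]
    rw [Finset.sum_comm (f := fun i j => K j i)]
  rw [Finset.sum_comm (f := fun j i => R i j)]
  refine nsmul_right_injective two_ne_zero ?_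
  simp only [← hsymm, h]

theorem sum_minors_eq_of_symmetric_derivatives {ι : Type*} [Fintype ι] {g : ι → ℝ}
    {H : ι → ι → ℝ} {T : ι → ι → ι → ℝ} {w : ℝ} {A : ι → ι → ℝ} {B : ι → ℝ}
    (hH : ∀ i j, H i j = H j i) (hT₁ : ∀ i j k, T i j k = T j i k)
    (hT₂ : ∀ i j k, T i j k = T i k j) (hw : w ^ 2 = 1 + ∑ l, g l ^ 2)
    (hA : ∀ i j, A i j = H i j / w - g i * (∑ l, g l * H l j) / w ^ 3)
    (hB : ∀ j, B j = ∑ i, ((H i i * H j j + T i i j * g j - H i j * H i j - T i j j * g i)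
        / (1 + ∑ l, g l ^ 2)
      - 2 * (H i i * g j - H i j * g i) * (∑ l, g l * H l j) / (1 + ∑ l, g l ^ 2) ^ 2)) :
    ∑ i, ∑ j, (A i i * A j j - A i j * A j i) = ∑ j, B j := by
  have hw0 : w ≠ 0 := by
    rintro rfl
    nlinarith [Finset.sum_nonneg fun l (_ : l ∈ Finset.univ) => sq_nonneg (g l)]
  simp only [hA, hB, ← hw]
  refine Finset.sum_sum_eq_of_add_swap fun i j => ?_
  have hTiij : T i i j = T j i i := by rw [hT₂, hT₁]
  have hTijj : T j j i = T i j j := by rw [hT₂, hT₁]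
  rw [hTiij, hTijj, hH j i]
  field_simp
  ring

namespace GraphCurvature

section Definitions

variable {ι E : Type*} [NormedAddCommGroup E] [NormedSpace ℝ E] (e : ι → E) (f : E → ℝ)

noncomputable def partialDeriv (i : ι) (x : E) : ℝ := fderiv ℝ f x (e i)

variable [Fintype ι]

noncomputable def areaElement (x : E) : ℝ := √(1 + ∑ l, partialDeriv e f l x ^ 2)

noncomputable def shapeOperator (i j : ι) (x : E) : ℝ :=
  partialDeriv e (fun y => partialDeriv e f i y / areaElement e f y) j x

noncomputable def curvatureField (j : ι) (y : E) : ℝ :=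
  ∑ i, (partialDeriv e (partialDeriv e f i) i y * partialDeriv e f j y -
      partialDeriv e (partialDeriv e f i) j y * partialDeriv e f i y) /
    (1 + ∑ l, partialDeriv e f l y ^ 2)

end Definitions

variable {ι E : Type*} [NormedAddCommGroup E] [NormedSpace ℝ E] (e : ι → E) {f : E → ℝ} {x : E}

theorem _root_.ContDiffAt.partialDeriv {n : ℕ} (hf : ContDiffAt ℝ (n + 1) f x) (i : ι) :
    ContDiffAt ℝ n (partialDeriv e f i) x :=
  hf.fderiv_right_succ.clm_apply contDiffAt_const

theorem partialDeriv_partialDeriv (hf : DifferentiableAt ℝ (fderiv ℝ f) x) (i j : ι) :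
    partialDeriv e (partialDeriv e f i) j x = fderiv ℝ (fderiv ℝ f) x (e j) (e i) := by
  have h : HasFDerivAt (partialDeriv e f i) ((fderiv ℝ (fderiv ℝ f) x).flip (e i)) x :=
    hf.hasFDerivAt.apply_const (e i)
  rw [partialDeriv, h.fderiv, flip_apply]

theorem partialDeriv_comm (hf : ContDiffAt ℝ 2 f x) (i j : ι) :
    partialDeriv e (partialDeriv e f i) j x = partialDeriv e (partialDeriv e f j) i x := by
  have hD : DifferentiableAt ℝ (fderiv ℝ f) x :=
    (hf.fderiv_right (m := 1) (by norm_num)).differentiableAt (by norm_num)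
  rw [partialDeriv_partialDeriv e hD, partialDeriv_partialDeriv e hD]
  exact hf.isSymmSndFDerivAt (by simp) (e j) (e i)

theorem partialDeriv_partialDeriv_partialDeriv_comm (hf : ContDiffAt ℝ 3 f x) (i j k : ι) :
    partialDeriv e (partialDeriv e (partialDeriv e f i) j) k x =
      partialDeriv e (partialDeriv e (partialDeriv e f j) i) k x := by
  have hcomm : partialDeriv e (partialDeriv e f i) j =ᶠ[𝓝 x]
      partialDeriv e (partialDeriv e f j) i := by
    filter_upwards [hf.eventually (by simp)] with y hy
    exact partialDeriv_comm e (hy.of_le (by norm_num)) i j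
  rw [partialDeriv, partialDeriv, hcomm.fderiv_eq]

variable [Fintype ι]

theorem one_add_sum_sq_pos (y : E) : 0 < 1 + ∑ l, partialDeriv e f l y ^ 2 := by positivity

theorem sq_areaElement (y : E) : areaElement e f y ^ 2 = 1 + ∑ l, partialDeriv e f l y ^ 2 :=
  Real.sq_sqrt (one_add_sum_sq_pos e y).le

theorem areaElement_pos (y : E) : 0 < areaElement e f y :=
  Real.sqrt_pos.mpr (one_add_sum_sq_pos e y)

theorem hasFDerivAt_one_add_sum_sq (hf : ContDiffAt ℝ 2 f x) :
    HasFDerivAt (fun y => 1 + ∑ l, partialDeriv e f l y ^ 2)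
      (∑ l, (2 * partialDeriv e f l x) • fderiv ℝ (partialDeriv e f l) x) x := by
  refine (HasFDerivAt.fun_sum fun l _ => ?_).const_add 1
  simpa using ((hf.partialDeriv e l).differentiableAt one_ne_zero).hasFDerivAt.pow 2

theorem hasFDerivAt_areaElement (hf : ContDiffAt ℝ 2 f x) :
    HasFDerivAt (areaElement e f) ((1 / (2 * areaElement e f x)) •
      ∑ l, (2 * partialDeriv e f l x) • fderiv ℝ (partialDeriv e f l) x) x :=
  (hasFDerivAt_one_add_sum_sq e hf).sqrt (one_add_sum_sq_pos e x).ne'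

theorem shapeOperator_eq (hf : ContDiffAt ℝ 2 f x) (i j : ι) :
    shapeOperator e f i j x =
      partialDeriv e (partialDeriv e f i) j x / areaElement e f x -
        partialDeriv e f i x *
            (∑ l, partialDeriv e f l x * partialDeriv e (partialDeriv e f l) j x) /
          areaElement e f x ^ 3 := by
  have hA := ((hf.partialDeriv e i).differentiableAt one_ne_zero).hasFDerivAt.div
    (hasFDerivAt_areaElement e hf) (areaElement_pos e x).ne'
  rw [shapeOperator, partialDeriv, hA.fderiv]
  simp only [sub_apply, smul_apply, sum_apply, smul_eq_mul, ← partialDeriv.eq_1, mul_assoc,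
    ← Finset.mul_sum]
  have hw := (areaElement_pos e (f := f) x).ne'
  field_simp

theorem partialDeriv_curvatureField (hf : ContDiffAt ℝ 3 f x) (j : ι) :
    partialDeriv e (curvatureField e f j) j x =
      ∑ i, ((partialDeriv e (partialDeriv e f i) i x * partialDeriv e (partialDeriv e f j) j x +
          partialDeriv e (partialDeriv e (partialDeriv e f i) i) j x * partialDeriv e f j x -
          partialDeriv e (partialDeriv e f i) j x * partialDeriv e (partialDeriv e f i) j x -
          partialDeriv e (partialDeriv e (partialDeriv e f i) j) j x * partialDeriv e f i x) /
            (1 + ∑ l, partialDeriv e f l x ^ 2) -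
        2 * (partialDeriv e (partialDeriv e f i) i x * partialDeriv e f j x -
          partialDeriv e (partialDeriv e f i) j x * partialDeriv e f i x) *
          (∑ l, partialDeriv e f l x * partialDeriv e (partialDeriv e f l) j x) /
            (1 + ∑ l, partialDeriv e f l x ^ 2) ^ 2) := by
  have hf₁ (i : ι) : HasFDerivAt (partialDeriv e f i) (fderiv ℝ (partialDeriv e f i) x) x :=
    ((hf.partialDeriv e i).differentiableAt (by norm_num)).hasFDerivAt
  have hf₂ (i k : ι) : HasFDerivAt (partialDeriv e (partialDeriv e f i) k)
      (fderiv ℝ (partialDeriv e (partialDeriv e f i) k) x) x :=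
    (((hf.partialDeriv e i).partialDeriv e k).differentiableAt (by norm_num)).hasFDerivAt
  have hV : HasFDerivAt (curvatureField e f j) _ x := HasFDerivAt.fun_sum fun i _ =>
    (((hf₂ i i).mul (hf₁ j)).sub ((hf₂ i j).mul (hf₁ i))).div
      (hasFDerivAt_one_add_sum_sq e (hf.of_le (by norm_num))) (one_add_sum_sq_pos e x).ne'
  rw [partialDeriv, hV.fderiv]
  simp only [sub_apply, add_apply, smul_apply, sum_apply, smul_eq_mul, ← partialDeriv.eq_1,
    Pi.sub_apply, Pi.mul_apply, mul_assoc, ← Finset.mul_sum]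
  refine Finset.sum_congr rfl fun i _ => ?_
  ring

theorem sum_shapeOperator_minors_eq_sum_partialDeriv_curvatureField
    (hf : ContDiffAt ℝ 3 f x) :
    ∑ i, ∑ j, (shapeOperator e f i i x * shapeOperator e f j j x -
        shapeOperator e f i j x * shapeOperator e f j i x) =
      ∑ j, partialDeriv e (curvatureField e f j) j x :=
  sum_minors_eq_of_symmetric_derivatives
    (fun i j => partialDeriv_comm e (hf.of_le (by norm_num)) i j)
    (fun i j k => partialDeriv_partialDeriv_partialDeriv_comm e hf i j k)
    (fun i j k => partialDeriv_comm e (hf.partialDeriv e i) j k)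
    (sq_areaElement e x) (shapeOperator_eq e (hf.of_le (by norm_num)))
    (partialDeriv_curvatureField e hf)

end GraphCurvature

theorem stmt7_general (n : ℕ) (Ω : Set (Fin n → ℝ)) (hΩ : IsOpen Ω)
    (f : (Fin n → ℝ) → ℝ) (hf : ContDiffOn ℝ 3 f Ω) (p : Fin n → ℝ) (hp : p ∈ Ω) :
    let F : Fin n → (Fin n → ℝ) → ℝ := fun i x => fderiv ℝ f x (Pi.single i 1)
    let S : Fin n → Fin n → (Fin n → ℝ) → ℝ :=
      fun i j x => fderiv ℝ (F i) x (Pi.single j 1)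
    let w : (Fin n → ℝ) → ℝ := fun x => Real.sqrt (1 + ∑ l, (F l x) ^ 2)
    let A : Fin n → Fin n → (Fin n → ℝ) → ℝ :=
      fun i j x => fderiv ℝ (fun y => F i y / w y) x (Pi.single j 1)
    (∑ i, ∑ j, (A i i p * A j j p - A i j p * A j i p)) =
      ∑ j, fderiv ℝ
        (fun y => ∑ i, (S i i y * F j y - S i j y * F i y) / (1 + ∑ l, (F l y) ^ 2))
        p (Pi.single j 1) :=
  GraphCurvature.sum_shapeOperator_minors_eq_sum_partialDeriv_curvatureField
    (fun i => Pi.single i 1) (hf.contDiffAt (hΩ.mem_nhds hp))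

/-- Proposition 5.3 (Lam): the scalar curvature of the graph of `f`, expressed
extrinsically as `R(f) = Σ_{i,j}(A_i^i A_j^j − A_i^j A_j^i)` with
`A_j^i = ∂_j(f_i/w)`, `w = √(1+|Df|²)`, has the divergence form
`R(f) = Σ_j ∂_j [ Σ_i (f_{ii}f_j − f_{ij}f_i)/(1+|Df|²) ]` on the open set
where `f` is `C³`. -/
theorem stmt7 (n : ℕ) (hn : 1 ≤ n) (Ω : Set (Fin n → ℝ)) (hΩ : IsOpen Ω)
    (f : (Fin n → ℝ) → ℝ) (hf : ContDiffOn ℝ 3 f Ω) (p : Fin n → ℝ) (hp : p ∈ Ω) :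
    let F : Fin n → (Fin n → ℝ) → ℝ := fun i x => fderiv ℝ f x (Pi.single i 1)
    let S : Fin n → Fin n → (Fin n → ℝ) → ℝ :=
      fun i j x => fderiv ℝ (F i) x (Pi.single j 1)
    let w : (Fin n → ℝ) → ℝ := fun x => Real.sqrt (1 + ∑ l, (F l x) ^ 2)
    let A : Fin n → Fin n → (Fin n → ℝ) → ℝ :=
      fun i j x => fderiv ℝ (fun y => F i y / w y) x (Pi.single j 1)
    (∑ i, ∑ j, (A i i p * A j j p - A i j p * A j i p)) =
      ∑ j, fderiv ℝ
        (fun y => ∑ i, (S i i y * F j y - S i j y * F i y) / (1 + ∑ l, (F l y) ^ 2))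
        p (Pi.single j 1) :=
  stmt7_general n Ω hΩ f hf p hp
end

section
/- Let n ≥ 3, let k be an odd integer with 3 ≤ k ≤ n, and let a be a real number with n/k < a < n. Set t = 1 − a/r for r ∈ (a−1, a+1). Then (1−a/r)^{k−1}·(1 + ((n−k)/k)(1−a/r)) ≥ 0 for all r ∈ (a−1, a+1), while the quantity n·r − (n−1)a changes sign on (a−1, a+1): there exist r₁, r₂ ∈ (a−1, a+1) with n r₁ − (n−1)a < 0 < n r₂ − (n−1)a. -/
/-- Example 4.1: for `n ≥ 3`, odd `k` with `3 ≤ k ≤ n`, and `n/k < a < n`: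
the `k`-th mean curvature factor `(1−a/r)^{k−1}(1 + ((n−k)/k)(1−a/r))` is
nonnegative for all `r ∈ (a−1, a+1)`, while the mean curvature (which has the
sign of `n·r − (n−1)·a`) changes sign on `(a−1, a+1)`. -/
theorem stmt9 (n k : ℕ) (hn : 3 ≤ n) (hk : 3 ≤ k) (hodd : Odd k) (hkn : k ≤ n)
    (a : ℝ) (ha1 : (n : ℝ) / k < a) (ha2 : a < n) :
    (∀ r : ℝ, a - 1 < r → r < a + 1 →
        0 ≤ (1 - a / r) ^ (k - 1) * (1 + ((n : ℝ) - k) / k * (1 - a / r))) ∧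
    (∃ r₁ : ℝ, a - 1 < r₁ ∧ r₁ < a + 1 ∧ (n : ℝ) * r₁ - ((n : ℝ) - 1) * a < 0) ∧
    (∃ r₂ : ℝ, a - 1 < r₂ ∧ r₂ < a + 1 ∧ 0 < (n : ℝ) * r₂ - ((n : ℝ) - 1) * a) := by
  have hkR : (3 : ℝ) ≤ k := by exact_mod_cast hk
  have hnR : (3 : ℝ) ≤ n := by exact_mod_cast hn
  have hknR : (k : ℝ) ≤ n := by exact_mod_cast hkn
  have hkpos : (0 : ℝ) < k := by linarith
  have hnk1 : (1 : ℝ) ≤ (n : ℝ) / k := (one_le_div hkpos).2 hknR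
  have ha1' : (1 : ℝ) < a := lt_of_le_of_lt hnk1 ha1
  -- c = (n-k)/k
  have hc0 : (0 : ℝ) ≤ ((n : ℝ) - k) / k := div_nonneg (by linarith) (le_of_lt hkpos)
  have hca : ((n : ℝ) - k) / k < a - 1 := by
    rw [div_lt_iff₀ hkpos]
    have : (n : ℝ) < a * k := (div_lt_iff₀ hkpos).1 ha1
    nlinarith
  refine ⟨?_, ?_, ?_⟩
  · intro r hr1 hr2
    have hr0 : 0 < r := by linarith
    set c : ℝ := ((n : ℝ) - k) / k with hc
    rcases le_or_gt (a / r) 1 with h | h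
    · have ht : 0 ≤ 1 - a / r := by linarith
      exact mul_nonneg (pow_nonneg ht _) (by nlinarith)
    · have heven : Even (k - 1) := by
        rcases hodd with ⟨m, hm⟩
        refine ⟨m, ?_⟩
        omega
      have hp : 0 ≤ (1 - a / r) ^ (k - 1) := heven.pow_nonneg _
      have hs : a / r * (a - 1) < a := by
        rw [div_mul_eq_mul_div, div_lt_iff₀ hr0]
        nlinarith
      refine mul_nonneg hp ?_
      nlinarith [mul_le_mul_of_nonneg_right (le_of_lt hca) (le_of_lt (by linarith : (0:ℝ) < a / r - 1))]
  · refine ⟨(a - 1 + ((n : ℝ) - 1) * a / n) / 2, ?_, ?_, ?_⟩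
    · have : a - 1 < ((n : ℝ) - 1) * a / n := by
        rw [lt_div_iff₀ (by linarith : (0:ℝ) < n)]
        nlinarith
      linarith
    · have : ((n : ℝ) - 1) * a / n < a := by
        rw [div_lt_iff₀ (by linarith : (0:ℝ) < n)]
        nlinarith
      linarith
    · have h1 : a - 1 < ((n : ℝ) - 1) * a / n := by
        rw [lt_div_iff₀ (by linarith : (0:ℝ) < n)]
        nlinarith
      have h2 : (n : ℝ) * (((n : ℝ) - 1) * a / n) = ((n : ℝ) - 1) * a := by
        field_simp
      nlinarith
  · exact ⟨a, by linarith, by linarith, by nlinarith⟩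
end

section
/- Let n ≥ 4 and let k be an even integer with 4 ≤ k ≤ n. Define t₁ = −(k−1)/(n−k) · ( √((n−1)/(k(n−k))) + 1 )^{−1} (for k < n). Then for all real t ≥ t₁, binom(n−2,k)·t² + 2·binom(n−2,k−1)·t + binom(n−2,k−2) ≥ 0. -/
/-!
By `k C(n-2,k) = (n-1-k) C(n-2,k-1)` and `(k-1) C(n-2,k-1) = (n-k) C(n-2,k-2)`, the quadratic
times `k (n-k)` is `C(n-2,k-1)` times `P(t) = (n-k-1)(n-k) t² + 2k(n-k) t + k(k-1)`. The
discriminant of `P` is `4k(n-k)(n-1)`, and rationalizing its larger root gives `t₁`. Since `t₁`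
lies right of the vertex of `P` and the leading coefficient is nonnegative, `P ≥ 0` on `[t₁, ∞)`.
-/

open Real

theorem quadratic_nonneg_of_root_le {a b c r t : ℝ} (ha : 0 ≤ a) (hr : a * r ^ 2 + b * r + c = 0)
    (hvertex : 0 ≤ 2 * a * r + b) (hrt : r ≤ t) : 0 ≤ a * t ^ 2 + b * t + c := by
  have hfactor : a * t ^ 2 + b * t + c = (t - r) * (a * (t + r) + b) := by
    linear_combination hr
  rw [hfactor]
  exact mul_nonneg (by linarith) (by nlinarith)

theorem Nat.cast_succ_mul_choose_succ {R : Type*} [CommRing R] {m j : ℕ} (hjm : j ≤ m) :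
    ((j : R) + 1) * (m.choose (j + 1) : R) = ((m : R) - j) * (m.choose j : R) := by
  have h := congrArg (Nat.cast : ℕ → R) (Nat.choose_succ_right_eq m j)
  push_cast [Nat.cast_sub hjm] at h
  linear_combination h

section NormalizedQuadratic

variable {n k : ℝ}

theorem normalizedQuadratic_eval_largerRoot (hk : 1 ≤ k) (hkn : k < n) :
    let r := -(k - 1) / (n - k) * (√((n - 1) / (k * (n - k))) + 1)⁻¹
    (n - k - 1) * (n - k) * r ^ 2 + 2 * k * (n - k) * r + k * (k - 1) = 0 := by
  intro r
  set s := √((n - 1) / (k * (n - k)))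
  have hnk : 0 < n - k := by linarith
  have hs : s ^ 2 * (k * (n - k)) = n - 1 := by
    rw [sq_sqrt (div_nonneg (by linarith) (by positivity))]
    field_simp
  simp only [r]
  field_simp
  linear_combination (k - 1) * hs

theorem normalizedQuadratic_nonneg (hk : 1 ≤ k) (hkn : k + 1 ≤ n) {t : ℝ}
    (ht : -(k - 1) / (n - k) * (√((n - 1) / (k * (n - k))) + 1)⁻¹ ≤ t) :
    0 ≤ (n - k - 1) * (n - k) * t ^ 2 + 2 * k * (n - k) * t + k * (k - 1) := by
  set u := (√((n - 1) / (k * (n - k))) + 1)⁻¹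
  have hnk : 0 < n - k := by linarith
  have hu : u ≤ 1 := inv_le_one_of_one_le₀ (by linarith [sqrt_nonneg ((n - 1) / (k * (n - k)))])
  have hr : -(k - 1) ≤ (n - k) * (-(k - 1) / (n - k) * u) := by
    rw [← mul_assoc, mul_div_cancel₀ _ hnk.ne']
    nlinarith
  refine quadratic_nonneg_of_root_le (by nlinarith)
    (normalizedQuadratic_eval_largerRoot hk (by linarith)) ?_ ht
  nlinarith

end NormalizedQuadratic

theorem stmt11_general (n k : ℕ) (hk : 4 ≤ k) (hkn : k < n) (t : ℝ)
    (ht : -((k : ℝ) - 1) / ((n : ℝ) - k) *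
        (Real.sqrt (((n : ℝ) - 1) / (k * ((n : ℝ) - k))) + 1)⁻¹ ≤ t) :
    0 ≤ (Nat.choose (n - 2) k : ℝ) * t ^ 2
        + 2 * (Nat.choose (n - 2) (k - 1) : ℝ) * t
        + (Nat.choose (n - 2) (k - 2) : ℝ) := by
  have hk1 : (1 : ℝ) ≤ k := by exact_mod_cast (by omega : 1 ≤ k)
  have hkn1 : (k : ℝ) + 1 ≤ n := by exact_mod_cast hkn
  have hcast_n2 : ((n - 2 : ℕ) : ℝ) = n - 2 := by rw [Nat.cast_sub (by omega)]; norm_num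
  have hcast_k1 : ((k - 1 : ℕ) : ℝ) = k - 1 := by rw [Nat.cast_sub (by omega)]; norm_num
  have hcast_k2 : ((k - 2 : ℕ) : ℝ) = k - 2 := by rw [Nat.cast_sub (by omega)]; norm_num
  have hA := Nat.cast_succ_mul_choose_succ (R := ℝ) (m := n - 2) (j := k - 1) (by omega)
  have hC := Nat.cast_succ_mul_choose_succ (R := ℝ) (m := n - 2) (j := k - 2) (by omega)
  rw [show k - 1 + 1 = k by omega, hcast_n2, hcast_k1] at hA
  rw [show k - 2 + 1 = k - 1 by omega, hcast_n2, hcast_k2] at hC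
  have hB : (0 : ℝ) < (n - 2).choose (k - 1) := by exact_mod_cast Nat.choose_pos (by omega)
  have hP := normalizedQuadratic_nonneg hk1 hkn1 ht
  have hscale : (k : ℝ) * (n - k) * ((n - 2).choose k * t ^ 2
      + 2 * (n - 2).choose (k - 1) * t + (n - 2).choose (k - 2))
      = (n - 2).choose (k - 1) * ((n - k - 1) * (n - k) * t ^ 2 + 2 * k * (n - k) * t
        + k * (k - 1)) := by
    linear_combination (n - k) * t ^ 2 * hA - k * hC
  refine (mul_nonneg_iff_of_pos_left (by nlinarith : (0 : ℝ) < k * (n - k))).mp ?_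
  rw [hscale]
  exact mul_nonneg hB.le hP

/-- Example 4.2: for even `k` with `4 ≤ k < n`, setting
`t₁ = −(k−1)/(n−k)·(√((n−1)/(k(n−k))) + 1)⁻¹`, the quadratic
`C(n−2,k)t² + 2C(n−2,k−1)t + C(n−2,k−2)` is nonnegative for all `t ≥ t₁`. -/
theorem stmt11 (n k : ℕ) (hk : 4 ≤ k) (hkn : k < n) (heven : Even k) (t : ℝ)
    (ht : -((k : ℝ) - 1) / ((n : ℝ) - k) *
        (Real.sqrt (((n : ℝ) - 1) / (k * ((n : ℝ) - k))) + 1)⁻¹ ≤ t) :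
    0 ≤ (Nat.choose (n - 2) k : ℝ) * t ^ 2
        + 2 * (Nat.choose (n - 2) (k - 1) : ℝ) * t
        + (Nat.choose (n - 2) (k - 2) : ℝ) :=
  stmt11_general n k hk hkn t ht
end

section
/- Let n ≥ 4, k even with 4 ≤ k ≤ n, and a a real number with 1 + b(n,k) < a < n/2, where b(n,k) = (n−k)/(k−1) + (1/(k−1))√((n−1)(n−k)/k). Then for every t with −1/(a−1) < t < 1/(a+1), the quantity σ_k(t) = binom(n−2,k)t^k + 2binom(n−2,k−1)t^{k−1} + binom(n−2,k−2)t^{k−2} is nonnegative, while σ₁(t) = (n−2)t + 2 takes both positive and negative values as t ranges over (−1/(a−1), 1/(a+1)). -/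
/-! Since `k` is even, `σ_k(t) = t^(k-2) · q(t)` with `t^(k-2) ≥ 0`, where
`q(t) = C(n-2,k) t² + 2 C(n-2,k-1) t + C(n-2,k-2)`. For `t ≥ 0` every term is nonnegative. For
`t < 0` substitute `s = -1/t`: then `q(t) = t² p(s)` with
`p(s) = C(n-2,k-2) s² - 2 C(n-2,k-1) s + C(n-2,k)`, and the ratios of consecutive binomial
coefficients show that the larger root of `p` is exactly `b(n,k)`. As `t > -1/(a-1)` forces
`s > a - 1 > b(n,k)`, we get `p(s) ≥ 0`. The sign change of `σ₁` happens at `t = -2/(n-2)`, which lies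
in the interval precisely because `a < n/2`. -/

open Real

theorem cast_choose_succ_mul (N i : ℕ) :
    (N.choose (i + 1) : ℝ) * (i + 1) = N.choose i * ((N : ℝ) - i) := by
  rcases le_or_gt i N with hi | hi
  · rw [← Nat.cast_sub hi]
    exact_mod_cast Nat.choose_succ_right_eq N i
  · simp [Nat.choose_eq_zero_of_lt hi, Nat.choose_eq_zero_of_lt (Nat.lt_succ_of_lt hi)]

/-- The larger root of `s ↦ C(N,j) s² - 2 C(N,j+1) s + C(N,j+2)`; with `N = n - 2`, `j = k - 2` it is
`b(n,k)`. -/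
noncomputable def chooseQuadraticRoot (N j : ℕ) : ℝ :=
  ((N : ℝ) - j + √((N + 1) * ((N : ℝ) - j) / (j + 2))) / (j + 1)

theorem choose_quadratic_nonneg (N j : ℕ) {s : ℝ} (hs : chooseQuadraticRoot N j ≤ s) :
    0 ≤ (N.choose j : ℝ) * s ^ 2 - 2 * N.choose (j + 1) * s + N.choose (j + 2) := by
  set p : ℝ := (N : ℝ) - j
  set X : ℝ := (j + 1) * s - p
  have hsqrt : √((N + 1) * p / (j + 2)) ≤ X := by
    rw [chooseQuadraticRoot, div_le_iff₀ (by positivity)] at hs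
    linarith
  have hdisc : (N + 1) * p ≤ (j + 2) * X ^ 2 := by
    rw [sqrt_le_iff, div_le_iff₀ (by positivity)] at hsqrt
    linarith [hsqrt.2]
  have h1 := cast_choose_succ_mul N j
  have h2 := cast_choose_succ_mul N (j + 1)
  push_cast at h2
  -- completing the square after clearing the denominators `(j+1)²(j+2)`
  have key : ((j : ℝ) + 1) ^ 2 * (j + 2) *
        ((N.choose j : ℝ) * s ^ 2 - 2 * N.choose (j + 1) * s + N.choose (j + 2))
      = N.choose j * ((j + 2) * X ^ 2 - (N + 1) * p) := by
    linear_combination (((j : ℝ) + 1) * (p - 1) - 2 * (j + 1) * (j + 2) * s) * h1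
      + ((j : ℝ) + 1) ^ 2 * h2
  refine nonneg_of_mul_nonneg_right ?_ (by positivity : (0 : ℝ) < (j + 1) ^ 2 * (j + 2))
  rw [key]
  exact mul_nonneg (Nat.cast_nonneg _) (by linarith)

theorem choose_quadratic_rev_nonneg (N j : ℕ) {ρ t : ℝ} (hρ : chooseQuadraticRoot N j ≤ ρ)
    (ht : -1 / ρ < t) :
    0 ≤ (N.choose (j + 2) : ℝ) * t ^ 2 + 2 * N.choose (j + 1) * t + N.choose j := by
  rcases le_or_gt 0 t with ht0 | ht0
  · positivity
  have hρ0 : 0 < ρ := by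
    by_contra! hρ0
    linarith [div_nonneg_of_nonpos (by norm_num : (-1 : ℝ) ≤ 0) hρ0]
  have hs : ρ ≤ -1 / t := by
    rw [le_div_iff_of_neg ht0]
    rw [div_lt_iff₀ hρ0] at ht
    linarith
  have hrev : (N.choose (j + 2) : ℝ) * t ^ 2 + 2 * N.choose (j + 1) * t + N.choose j
      = t ^ 2 * ((N.choose j : ℝ) * (-1 / t) ^ 2 - 2 * N.choose (j + 1) * (-1 / t)
          + N.choose (j + 2)) := by
    field_simp [ht0.ne]
    ring
  rw [hrev]
  exact mul_nonneg (sq_nonneg t) (choose_quadratic_nonneg N j (hρ.trans hs))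

theorem sigma_nonneg (N j : ℕ) (hj : Even j) {ρ t : ℝ} (hρ : chooseQuadraticRoot N j ≤ ρ)
    (ht : -1 / ρ < t) :
    0 ≤ (N.choose (j + 2) : ℝ) * t ^ (j + 2) + 2 * N.choose (j + 1) * t ^ (j + 1)
      + N.choose j * t ^ j := by
  have hfactor : (N.choose (j + 2) : ℝ) * t ^ (j + 2) + 2 * N.choose (j + 1) * t ^ (j + 1)
      + N.choose j * t ^ j
      = t ^ j * ((N.choose (j + 2) : ℝ) * t ^ 2 + 2 * N.choose (j + 1) * t + N.choose j) := by
    ring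
  rw [hfactor]
  exact mul_nonneg (hj.pow_nonneg t) (choose_quadratic_rev_nonneg N j hρ ht)

/-- Example 4.2: for even `k` with `n ≥ k ≥ 4` and `1 + b(n,k) < a < n/2`,
where `b(n,k) = (n−k)/(k−1) + (1/(k−1))√((n−1)(n−k)/k)`:
for every `t ∈ (−1/(a−1), 1/(a+1))` one has
`σ_k(t) = C(n−2,k)t^k + 2C(n−2,k−1)t^{k−1} + C(n−2,k−2)t^{k−2} ≥ 0`,
while `σ₁(t) = (n−2)t + 2` takes both positive and negative values on the interval. -/
theorem stmt12 (n k : ℕ) (hk : 4 ≤ k) (hkn : k ≤ n) (heven : Even k) (a : ℝ)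
    (ha1 : 1 + (((n : ℝ) - k) / ((k : ℝ) - 1)
        + 1 / ((k : ℝ) - 1) * Real.sqrt (((n : ℝ) - 1) * ((n : ℝ) - k) / k)) < a)
    (ha2 : a < (n : ℝ) / 2) :
    (∀ t : ℝ, -1 / (a - 1) < t → t < 1 / (a + 1) →
        0 ≤ (Nat.choose (n - 2) k : ℝ) * t ^ k
            + 2 * (Nat.choose (n - 2) (k - 1) : ℝ) * t ^ (k - 1)
            + (Nat.choose (n - 2) (k - 2) : ℝ) * t ^ (k - 2)) ∧
    (∃ t : ℝ, -1 / (a - 1) < t ∧ t < 1 / (a + 1) ∧ 0 < ((n : ℝ) - 2) * t + 2) ∧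
    (∃ t : ℝ, -1 / (a - 1) < t ∧ t < 1 / (a + 1) ∧ ((n : ℝ) - 2) * t + 2 < 0) := by
  obtain ⟨j, rfl⟩ : ∃ j, k = j + 2 := ⟨k - 2, by omega⟩
  obtain ⟨N, rfl⟩ : ∃ N, n = N + 2 := ⟨n - 2, by omega⟩
  have hjN : (j : ℝ) ≤ N := by exact_mod_cast (by omega : j ≤ N)
  have hj : Even j := (Nat.even_add.1 heven).2 even_two
  rw [Nat.add_sub_cancel, Nat.add_sub_cancel, show j + 2 - 1 = j + 1 by omega]
  push_cast at ha1 ha2 ⊢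
  simp only [add_sub_cancel_right]
  have hroot_eq : chooseQuadraticRoot N j = (N + 2 - (j + 2)) / (j + 2 - 1)
      + 1 / (j + 2 - 1) * √((N + 2 - 1) * (N + 2 - (j + 2)) / (j + 2)) := by
    rw [chooseQuadraticRoot, show (N : ℝ) + 2 - 1 = N + 1 by ring,
      show (N : ℝ) + 2 - (j + 2) = N - j by ring, show (j : ℝ) + 2 - 1 = j + 1 by ring]
    ring
  have hroot_nonneg : 0 ≤ chooseQuadraticRoot N j :=
    div_nonneg (add_nonneg (sub_nonneg.2 hjN) (sqrt_nonneg _)) (by positivity)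
  have hroot_lt : chooseQuadraticRoot N j < a - 1 := by linarith
  have hlower : -1 / (a - 1) < 0 := div_neg_of_neg_of_pos (by norm_num) (by linarith)
  have hupper : 0 < 1 / (a + 1) := one_div_pos.2 (by linarith)
  have hzero_mem : -1 / (a - 1) < -2 / N := by
    rw [div_lt_div_iff₀ (by linarith) (by linarith)]
    linarith
  obtain ⟨t, ht₁, ht₂⟩ := exists_between hzero_mem
  have hneg : t < 0 := ht₂.trans (div_neg_of_neg_of_pos (by norm_num) (by linarith))
  rw [lt_div_iff₀ (by linarith)] at ht₂
  exact ⟨fun t ht _ => sigma_nonneg N j hj hroot_lt.le ht, ⟨0, hlower, hupper, by norm_num⟩,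
    ⟨t, ht₁, by linarith, by linarith⟩⟩
end

section
/- Let n ≥ 2, Ω ⊆ ℝⁿ open, p ∈ Ω, and f ∈ C²(Ω) with Df(p) ≠ 0, f(p) = 0. Suppose the scalar curvature of the graph of f is nonnegative at p, i.e. 2σ₂(A)(p) ≥ 0 where A is the shape operator of the graph. Then at p: ⟨ν,η⟩·H·H_Σ ≥ (n/(2(n−1)))·⟨ν,η⟩²·H_Σ², where H is the mean curvature of the graph with respect to the upward normal ν = (−Df,1)/√(1+|Df|²), η = −Df/|Df|, and H_Σ is the mean curvature of the level set {f = 0} ⊂ ℝⁿ with respect to η. In particular if H(p) = 0 then H_Σ(p) = 0. -/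
/-!
Write `G = Df(p)`, `b = D²f(p)`, `S = |G|²`, `w = √(1 + S)`, `e = G / |G|`, `E = e eᵀ` and
`Π = 1 - E`. Differentiating `Df / √(a + |Df|²)` gives `A = w⁻¹ (Π + w⁻² E) b` for the graph
(`a = 1`) and `|G|⁻¹ Π b` for the level set (`a = 0`), so `⟨ν,η⟩ H_Σ = w⁻¹ tr (Π b)`.
Expanding `tr (A²)` along `Π + E = 1`, the hypothesis `tr (A²) ≤ (tr A)²` yields
`tr (Π b Π b) ≤ (tr Π b)² + 2 w⁻² (e ⬝ b e) tr (Π b)` once the nonnegative cross term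
`|Π b e|²` is dropped, and Cauchy–Schwarz on the `(n - 1)`-dimensional range of `Π` gives
`(tr Π b)² ≤ (n - 1) tr (Π b Π b)`. Combining the two is the claimed inequality.
-/

open Matrix

namespace Matrix

variable {m n R : Type*} [Fintype m] [Fintype n] [CommRing R]

theorem sq_trace_transpose_mul_le [LinearOrder R] [IsStrictOrderedRing R] (X Y : Matrix m n R) :
    trace (Xᵀ * Y) ^ 2 ≤ trace (Xᵀ * X) * trace (Yᵀ * Y) := by
  simp only [← vec_dotProduct_vec, dotProduct, ← sq]
  exact Finset.sum_mul_sq_le_sq_mul_sq _ _ _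

theorem trace_transpose_mul_self_nonneg [LinearOrder R] [IsStrictOrderedRing R]
    (X : Matrix m n R) : 0 ≤ trace (Xᵀ * X) := by
  rw [← vec_dotProduct_vec]
  exact Finset.sum_nonneg fun _ _ => mul_self_nonneg _

theorem trace_vecMulVec_mul_self (u v : n → R) :
    trace (vecMulVec u v * vecMulVec u v) = (u ⬝ᵥ v) ^ 2 := by
  rw [vecMulVec_mul_vecMulVec, trace_vecMulVec, dotProduct_smul, smul_eq_mul, dotProduct_comm v,
    sq]

theorem two_mul_sum_ite_lt_eq_sq_trace_sub_trace_mul_self [LinearOrder n] (A : Matrix n n R) :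
    2 * ∑ i, ∑ j, (if i < j then A i i * A j j - A i j * A j i else 0)
      = trace A ^ 2 - trace (A * A) := by
  set t : n → n → R := fun i j => A i i * A j j - A i j * A j i
  have hsplit : ∀ i j, t i j = (if i < j then t i j else 0) + (if j < i then t j i else 0) := by
    intro i j
    rcases lt_trichotomy i j with h | rfl | h
    · simp [h, h.not_gt]
    · simp [t]
    · simp [h, h.not_gt, t]; ring
  have hsum : ∑ i, ∑ j, t i j = trace A ^ 2 - trace (A * A) := by
    simp only [t, Finset.sum_sub_distrib, ← Finset.mul_sum, ← Finset.sum_mul, trace, diag,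
      mul_apply, sq]
  calc 2 * ∑ i, ∑ j, (if i < j then t i j else 0)
      = ∑ i, ∑ j, ((if i < j then t i j else 0) + (if j < i then t j i else 0)) := by
        rw [two_mul]
        simp only [Finset.sum_add_distrib]
        rw [Finset.sum_comm (f := fun i j => if j < i then t j i else 0)]
    _ = trace A ^ 2 - trace (A * A) := by simp only [← hsplit, hsum]

end Matrix

section RankOneProjection

variable {ι R : Type*} [Fintype ι] [DecidableEq ι] {e : ι → R}

local notation "E" => vecMulVec e e
local notation "Π" => (1 : Matrix ι ι R) - vecMulVec e e

section CommRing

variable [CommRing R]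

omit [DecidableEq ι] in
lemma vecMulVec_self_mul_self (he : e ⬝ᵥ e = 1) : E * E = E := by
  rw [vecMulVec_mul_vecMulVec, he, one_smul]

omit [Fintype ι] in
lemma transpose_one_sub_vecMulVec_self : (Π)ᵀ = Π := by
  rw [transpose_sub, transpose_one, transpose_vecMulVec]

lemma one_sub_vecMulVec_self_mul_self (he : e ⬝ᵥ e = 1) : Π * Π = Π := by
  rw [sub_mul, mul_sub, mul_sub, vecMulVec_self_mul_self he]
  noncomm_ring

lemma trace_one_sub_vecMulVec_self (he : e ⬝ᵥ e = 1) : trace Π = Fintype.card ι - 1 := by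
  rw [trace_sub, trace_one, trace_vecMulVec, he]

omit [DecidableEq ι] in
lemma trace_vecMulVec_self_mul_sq (b : Matrix ι ι R) :
    trace (E * b * E * b) = trace (E * b) ^ 2 := by
  rw [Matrix.mul_assoc (E * b), vecMulVec_mul, trace_vecMulVec_mul_self, trace_vecMulVec]

end CommRing

variable [Field R] [LinearOrder R] [IsStrictOrderedRing R] {b : Matrix ι ι R}

lemma sq_trace_one_sub_vecMulVec_mul_le (he : e ⬝ᵥ e = 1) (hb : bᵀ = b) :
    trace (Π * b) ^ 2 ≤ (Fintype.card ι - 1) * trace (Π * b * Π * b) := by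
  have h := sq_trace_transpose_mul_le Π (Π * b * Π)
  have hP : ∀ X : Matrix ι ι R, X * Π * Π = X * Π := fun X => by
    rw [Matrix.mul_assoc, one_sub_vecMulVec_self_mul_self he]
  simp only [transpose_one_sub_vecMulVec_self, transpose_mul, hb, ← Matrix.mul_assoc, hP,
    one_sub_vecMulVec_self_mul_self he, trace_one_sub_vecMulVec_self he] at h
  rwa [trace_mul_cycle, one_sub_vecMulVec_self_mul_self he, trace_mul_cycle _ b,
    ← Matrix.mul_assoc, ← Matrix.mul_assoc, one_sub_vecMulVec_self_mul_self he] at h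

lemma trace_one_sub_vecMulVec_mul_vecMulVec_mul_nonneg (he : e ⬝ᵥ e = 1) (hb : bᵀ = b) :
    0 ≤ trace (Π * b * E * b) := by
  have h := trace_transpose_mul_self_nonneg (Π * b * E)ᵀ
  have hE : ∀ X : Matrix ι ι R, X * E * E = X * E := fun X => by
    rw [Matrix.mul_assoc, vecMulVec_self_mul_self he]
  simp only [transpose_mul, transpose_one_sub_vecMulVec_self, transpose_vecMulVec, hb,
    ← Matrix.mul_assoc, hE] at h
  rwa [trace_mul_cycle, ← Matrix.mul_assoc, ← Matrix.mul_assoc,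
    one_sub_vecMulVec_self_mul_self he] at h

theorem card_div_mul_sq_trace_le_trace_mul_trace (hn : 2 ≤ Fintype.card ι) (he : e ⬝ᵥ e = 1)
    (hb : bᵀ = b) {ε : R} (hε : 0 ≤ ε)
    (hσ : trace ((Π + ε • E) * b * ((Π + ε • E) * b)) ≤ trace ((Π + ε • E) * b) ^ 2) :
    Fintype.card ι / (2 * (Fintype.card ι - 1)) * trace (Π * b) ^ 2
      ≤ trace ((Π + ε • E) * b) * trace (Π * b) := by
  have htr : trace ((Π + ε • E) * b) = trace (Π * b) + ε * trace (E * b) := by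
    rw [add_mul, trace_add, smul_mul_assoc, trace_smul, smul_eq_mul]
  have hcyc : trace (E * b * Π * b) = trace (Π * b * E * b) := by
    rw [Matrix.mul_assoc (E * b), trace_mul_comm, ← Matrix.mul_assoc]
  have htr2 : trace ((Π + ε • E) * b * ((Π + ε • E) * b))
      = trace (Π * b * Π * b) + 2 * ε * trace (Π * b * E * b) + ε ^ 2 * trace (E * b) ^ 2 := by
    simp only [add_mul, mul_add, smul_mul_assoc, mul_smul_comm, ← Matrix.mul_assoc, trace_add,
      trace_smul, smul_eq_mul, hcyc, trace_vecMulVec_self_mul_sq]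
    ring
  rw [htr2, htr] at hσ
  rw [htr]
  have hcs := sq_trace_one_sub_vecMulVec_mul_le he hb
  have hμ := trace_one_sub_vecMulVec_mul_vecMulVec_mul_nonneg he hb
  have hn' : (1 : R) ≤ Fintype.card ι - 1 := by
    rw [le_sub_iff_add_le, one_add_one_eq_two]
    exact_mod_cast hn
  rw [div_mul_eq_mul_div, div_le_iff₀ (by linarith)]
  nlinarith [mul_nonneg (sub_nonneg.2 hn') (mul_nonneg hε hμ)]

end RankOneProjection

section NormalizedHessian

variable {ι : Type*} [Fintype ι] [DecidableEq ι]

/-- At a point where `Df = G` and `D²f = b`, this is the shape operator of the graph of `f` for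
`a = 1`, and its trace is the mean curvature of the level set of `f` for `a = 0`
(`fderiv_partialDerivs_div_sqrt_apply`). -/
noncomputable def normalizedHessian (a : ℝ) (G : ι → ℝ) (b : Matrix ι ι ℝ) : Matrix ι ι ℝ :=
  (√(a + ∑ l, G l ^ 2))⁻¹ • ((1 - (a + ∑ l, G l ^ 2)⁻¹ • vecMulVec G G) * b)

noncomputable def unitDirection (G : ι → ℝ) : ι → ℝ := (√(∑ l, G l ^ 2))⁻¹ • G

variable {G : ι → ℝ} {b : Matrix ι ι ℝ}

omit [DecidableEq ι] in
lemma unitDirection_dotProduct_self (hG : 0 < ∑ l, G l ^ 2) :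
    unitDirection G ⬝ᵥ unitDirection G = 1 := by
  rw [unitDirection, smul_dotProduct, dotProduct_smul, smul_eq_mul, smul_eq_mul, ← mul_assoc,
    ← sq, inv_pow, Real.sq_sqrt hG.le]
  simp only [dotProduct, ← sq, inv_mul_cancel₀ hG.ne']

omit [DecidableEq ι] in
lemma vecMulVec_self_eq_smul_unitDirection (hG : 0 < ∑ l, G l ^ 2) :
    vecMulVec G G = (∑ l, G l ^ 2) • vecMulVec (unitDirection G) (unitDirection G) := by
  rw [unitDirection, smul_vecMulVec, vecMulVec_smul, smul_smul, smul_smul, mul_assoc, ← sq,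
    inv_pow, Real.sq_sqrt hG.le, mul_inv_cancel₀ hG.ne', one_smul]

lemma normalizedHessian_one_eq (hG : 0 < ∑ l, G l ^ 2) :
    normalizedHessian 1 G b = (√(1 + ∑ l, G l ^ 2))⁻¹ •
      ((1 - vecMulVec (unitDirection G) (unitDirection G)
        + (1 + ∑ l, G l ^ 2)⁻¹ • vecMulVec (unitDirection G) (unitDirection G)) * b) := by
  have hS : (1 + ∑ l, G l ^ 2)⁻¹ * ∑ l, G l ^ 2 = 1 - (1 + ∑ l, G l ^ 2)⁻¹ := by
    field_simp
    ring
  rw [normalizedHessian, vecMulVec_self_eq_smul_unitDirection hG, smul_smul, hS, sub_smul,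
    one_smul, sub_sub_eq_add_sub, add_sub_right_comm]

lemma normalizedHessian_zero_eq (hG : 0 < ∑ l, G l ^ 2) :
    normalizedHessian 0 G b = (√(∑ l, G l ^ 2))⁻¹ •
      ((1 - vecMulVec (unitDirection G) (unitDirection G)) * b) := by
  rw [normalizedHessian, zero_add, vecMulVec_self_eq_smul_unitDirection hG, smul_smul,
    inv_mul_cancel₀ hG.ne', one_smul]

theorem card_div_mul_sq_trace_normalizedHessian_le (hn : 2 ≤ Fintype.card ι)
    (hG : 0 < ∑ l, G l ^ 2) (hb : bᵀ = b)
    (hσ : trace (normalizedHessian 1 G b * normalizedHessian 1 G b)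
      ≤ trace (normalizedHessian 1 G b) ^ 2) :
    Fintype.card ι / (2 * (Fintype.card ι - 1)) * (√(∑ l, G l ^ 2) / √(1 + ∑ l, G l ^ 2)) ^ 2
        * trace (normalizedHessian 0 G b) ^ 2
      ≤ √(∑ l, G l ^ 2) / √(1 + ∑ l, G l ^ 2) * trace (normalizedHessian 1 G b)
        * trace (normalizedHessian 0 G b) := by
  rw [normalizedHessian_one_eq hG] at hσ ⊢
  rw [normalizedHessian_zero_eq hG]
  set g := √(∑ l, G l ^ 2)
  set w := √(1 + ∑ l, G l ^ 2)
  set E := vecMulVec (unitDirection G) (unitDirection G)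
  set M := (1 - E + (1 + ∑ l, G l ^ 2)⁻¹ • E) * b
  have hg : 0 < g := Real.sqrt_pos.2 hG
  have hw : 0 < w := Real.sqrt_pos.2 (by positivity)
  rw [smul_mul_smul_comm, trace_smul, trace_smul, smul_eq_mul, smul_eq_mul, mul_pow,
    ← sq] at hσ
  have key := card_div_mul_sq_trace_le_trace_mul_trace hn (unitDirection_dotProduct_self hG) hb
    (by positivity) (le_of_mul_le_mul_left hσ (by positivity))
  simp only [trace_smul, smul_eq_mul]
  calc _ = (w⁻¹) ^ 2 * (Fintype.card ι / (2 * (Fintype.card ι - 1)) * trace ((1 - E) * b) ^ 2) := by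
        field_simp
    _ ≤ (w⁻¹) ^ 2 * (trace M * trace ((1 - E) * b)) := by gcongr
    _ = _ := by field_simp

end NormalizedHessian

section Calculus

variable {ι : Type*} [Fintype ι] [DecidableEq ι] {f : (ι → ℝ) → ℝ} {p : ι → ℝ}

noncomputable def partialDerivs (f : (ι → ℝ) → ℝ) (x : ι → ℝ) : ι → ℝ :=
  fun i => fderiv ℝ f x (Pi.single i 1)

noncomputable def hessianMatrix (f : (ι → ℝ) → ℝ) (x : ι → ℝ) : Matrix ι ι ℝ :=
  of fun i j => fderiv ℝ (fderiv ℝ f) x (Pi.single j 1) (Pi.single i 1)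

lemma transpose_hessianMatrix (hf : ContDiffAt ℝ 2 f p) :
    (hessianMatrix f p)ᵀ = hessianMatrix f p := by
  ext i j
  exact hf.isSymmSndFDerivAt (by simp [minSmoothness_of_isRCLikeNormedField]) _ _

lemma hasFDerivAt_partialDerivs (hf : ContDiffAt ℝ 2 f p) (i : ι) :
    HasFDerivAt (fun x => partialDerivs f x i)
      ((fderiv ℝ (fderiv ℝ f) p).flip (Pi.single i 1)) p := by
  have hd : DifferentiableAt ℝ (fderiv ℝ f) p :=
    (hf.fderiv_right (m := 1) (by norm_num)).differentiableAt one_ne_zero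
  simpa [partialDerivs] using hd.hasFDerivAt.clm_apply (hasFDerivAt_const (Pi.single i 1) p)

lemma fderiv_partialDerivs_div_sqrt_apply (hf : ContDiffAt ℝ 2 f p) {a : ℝ}
    (ha : 0 < a + ∑ l, partialDerivs f p l ^ 2) (i j : ι) :
    fderiv ℝ (fun x => partialDerivs f x i / √(a + ∑ l, partialDerivs f x l ^ 2)) p
        (Pi.single j 1)
      = normalizedHessian a (partialDerivs f p) (hessianMatrix f p) i j := by
  set G := partialDerivs f p
  set D : ι → (ι → ℝ) →L[ℝ] ℝ := fun l => (fderiv ℝ (fderiv ℝ f) p).flip (Pi.single l 1)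
  have hsum : HasFDerivAt (fun x => a + ∑ l, partialDerivs f x l ^ 2) (∑ l, (2 * G l) • D l) p := by
    refine (HasFDerivAt.fun_sum fun l _ => ?_).const_add a
    simpa using (hasFDerivAt_partialDerivs hf l).pow 2
  have hs : HasFDerivAt (fun x => (√(a + ∑ l, partialDerivs f x l ^ 2))⁻¹) _ p :=
    (hasDerivAt_inv (Real.sqrt_pos.2 ha).ne').comp_hasFDerivAt p (hsum.sqrt ha.ne')
  simp only [div_eq_mul_inv]
  rw [((hasFDerivAt_partialDerivs hf i).fun_mul hs).fderiv]
  simp only [D, G, normalizedHessian, hessianMatrix, Real.sq_sqrt ha.le, one_div,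
    _root_.mul_inv_rev, neg_smul, smul_neg, _root_.add_apply, _root_.neg_apply, _root_.smul_apply,
    _root_.sum_apply, ContinuousLinearMap.flip_apply, smul_eq_mul, mul_assoc, ← Finset.mul_sum,
    inv_mul_cancel_left₀ (two_ne_zero (α := ℝ)), Matrix.sub_mul, one_mul, Algebra.smul_mul_assoc,
    Matrix.smul_apply, Matrix.sub_apply, of_apply, mul_apply, vecMulVec_apply]
  field_simp
  ring

end Calculus

theorem stmt19_general (n : ℕ) (hn : 2 ≤ n) (Ω : Set (Fin n → ℝ)) (hΩ : IsOpen Ω)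
    (f : (Fin n → ℝ) → ℝ) (hf : ContDiffOn ℝ 2 f Ω) (p : Fin n → ℝ) (hp : p ∈ Ω) :
    let F : Fin n → (Fin n → ℝ) → ℝ := fun i x => fderiv ℝ f x (Pi.single i 1)
    let w : (Fin n → ℝ) → ℝ := fun x => Real.sqrt (1 + ∑ l, (F l x) ^ 2)
    let gn : (Fin n → ℝ) → ℝ := fun x => Real.sqrt (∑ l, (F l x) ^ 2)
    let A : Fin n → Fin n → ℝ :=
      fun i j => fderiv ℝ (fun y => F i y / w y) p (Pi.single j 1)
    let H : ℝ := ∑ i, A i i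
    let HSig : ℝ := ∑ i, fderiv ℝ (fun y => F i y / gn y) p (Pi.single i 1)
    gn p ≠ 0 →
    0 ≤ 2 * ∑ i, ∑ j, (if i < j then A i i * A j j - A i j * A j i else 0) →
    ((gn p / w p) * H * HSig ≥ (n : ℝ) / (2 * ((n : ℝ) - 1)) * (gn p / w p) ^ 2 * HSig ^ 2
      ∧ (H = 0 → HSig = 0)) := by
  intro F w gn A H HSig hg hσ
  have hf2 : ContDiffAt ℝ 2 f p := hf.contDiffAt (hΩ.mem_nhds hp)
  have hS : 0 < ∑ l, partialDerivs f p l ^ 2 := Real.sqrt_ne_zero'.1 hg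
  have hA : of A = normalizedHessian 1 (partialDerivs f p) (hessianMatrix f p) :=
    ext fun i j => fderiv_partialDerivs_div_sqrt_apply hf2 (by positivity) i j
  have hH : H = trace (of A) := rfl
  have hHSig : HSig = trace (normalizedHessian 0 (partialDerivs f p) (hessianMatrix f p)) := by
    have h := fderiv_partialDerivs_div_sqrt_apply hf2 (by rwa [zero_add])
    simp only [zero_add] at h
    exact Finset.sum_congr rfl fun i _ => h i i
  have hσ₂ := two_mul_sum_ite_lt_eq_sq_trace_sub_trace_mul_self (of A)
  simp only [of_apply] at hσ₂
  rw [hσ₂, hA, sub_nonneg] at hσ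
  have key := card_div_mul_sq_trace_normalizedHessian_le (by simpa using hn) hS
    (transpose_hessianMatrix hf2) hσ
  rw [Fintype.card_fin, ← hA, ← hH, ← hHSig] at key
  refine ⟨key, fun hH0 => ?_⟩
  have hc : 0 < (n : ℝ) / (2 * ((n : ℝ) - 1)) * (gn p / w p) ^ 2 := by
    have : (2 : ℝ) ≤ n := by exact_mod_cast hn
    exact mul_pos (div_pos (by linarith) (by linarith)) (by positivity)
  rw [hH0, mul_zero, zero_mul] at key
  simpa using nonpos_of_mul_nonpos_right key hc

/-- Theorem 2.3 / Corollary 2.4 (graphical case): let `f` be `C²` near `p` with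
`Df(p) ≠ 0` and `f(p) = 0`. If the scalar curvature `2σ₂(A)` of the graph of `f`
is nonnegative at `p`, then `⟨ν,η⟩·H·H_Σ ≥ (n/(2(n−1)))·⟨ν,η⟩²·H_Σ²`, where
`H = Σ_i ∂_i(f_i/w)` is the mean curvature of the graph with respect to the
upward normal, `w = √(1+|Df|²)`, `⟨ν,η⟩ = |Df|/w`, and
`H_Σ = Σ_i ∂_i(f_i/|Df|)` is the mean curvature of the level set `{f = 0}` with
respect to `η = −Df/|Df|`. In particular `H(p) = 0` implies `H_Σ(p) = 0`. -/
theorem stmt19 (n : ℕ) (hn : 2 ≤ n) (Ω : Set (Fin n → ℝ)) (hΩ : IsOpen Ω)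
    (f : (Fin n → ℝ) → ℝ) (hf : ContDiffOn ℝ 2 f Ω) (p : Fin n → ℝ) (hp : p ∈ Ω)
    (hfp : f p = 0) :
    let F : Fin n → (Fin n → ℝ) → ℝ := fun i x => fderiv ℝ f x (Pi.single i 1)
    let w : (Fin n → ℝ) → ℝ := fun x => Real.sqrt (1 + ∑ l, (F l x) ^ 2)
    let gn : (Fin n → ℝ) → ℝ := fun x => Real.sqrt (∑ l, (F l x) ^ 2)
    let A : Fin n → Fin n → ℝ :=
      fun i j => fderiv ℝ (fun y => F i y / w y) p (Pi.single j 1)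
    let H : ℝ := ∑ i, A i i
    let HSig : ℝ := ∑ i, fderiv ℝ (fun y => F i y / gn y) p (Pi.single i 1)
    gn p ≠ 0 →
    0 ≤ 2 * ∑ i, ∑ j, (if i < j then A i i * A j j - A i j * A j i else 0) →
    ((gn p / w p) * H * HSig ≥ (n : ℝ) / (2 * ((n : ℝ) - 1)) * (gn p / w p) ^ 2 * HSig ^ 2
      ∧ (H = 0 → HSig = 0)) :=
  stmt19_general n hn Ω hΩ f hf p hp
end
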